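/- For every matrix M in H, the first and third rows of M belong to Ω₋₂ and the second row of M belongs to Ω₁. -/
import Mathlib


open Matrix

def Bmat : Matrix (Fin 3) (Fin 3) ℤ := !![3, 4, 0; 2, 3, 0; 0, 0, 1]
def Jmat : Matrix (Fin 3) (Fin 3) ℤ := !![0, 0, 1; 0, 1, 0; 1, 0, 0]

def BGL : GL (Fin 3) ℤ :=
  ⟨Bmat, !![3, -4, 0; -2, 3, 0; 0, 0, 1], by decide, by decide⟩

def JGL : GL (Fin 3) ℤ := ⟨Jmat, Jmat, by decide, by decide⟩

def H : Subgroup (GL (Fin 3) ℤ) := Subgroup.closure {BGL, JGL}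

/-- `Ω a` : integer solutions of `-2x₁² + x₂² - 2x₃² = a`, as row vectors. -/
def Omega (a : ℤ) : Set (Fin 3 → ℤ) :=
  {x | -2 * x 0 ^ 2 + x 1 ^ 2 - 2 * x 2 ^ 2 = a}

def Qm : Matrix (Fin 3) (Fin 3) ℤ := !![-2, 0, 0; 0, 1, 0; 0, 0, -2]

lemma invariant (M : GL (Fin 3) ℤ) (hM : M ∈ H) :
    (M : Matrix (Fin 3) (Fin 3) ℤ) * Qm * (M : Matrix (Fin 3) (Fin 3) ℤ)ᵀ = Qm := by
  induction hM using Subgroup.closure_induction with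
  | mem x hx =>
      rcases hx with h | h <;> subst h <;> decide
  | one => simp
  | mul x y hx hy ihx ihy =>
      have : ((x * y : GL (Fin 3) ℤ) : Matrix (Fin 3) (Fin 3) ℤ) =
          (x : Matrix (Fin 3) (Fin 3) ℤ) * (y : Matrix (Fin 3) (Fin 3) ℤ) := rfl
      rw [this, transpose_mul]
      calc (x : Matrix (Fin 3) (Fin 3) ℤ) * (y : Matrix (Fin 3) (Fin 3) ℤ) * Qm *
            ((y : Matrix (Fin 3) (Fin 3) ℤ)ᵀ * (x : Matrix (Fin 3) (Fin 3) ℤ)ᵀ)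
          = (x : Matrix (Fin 3) (Fin 3) ℤ) * ((y : Matrix (Fin 3) (Fin 3) ℤ) * Qm *
            (y : Matrix (Fin 3) (Fin 3) ℤ)ᵀ) * (x : Matrix (Fin 3) (Fin 3) ℤ)ᵀ := by
            noncomm_ring
        _ = Qm := by rw [ihy]; exact ihx
  | inv x hx ih =>
      have hx1 : (x : Matrix (Fin 3) (Fin 3) ℤ) * ((x⁻¹ : GL (Fin 3) ℤ) : Matrix (Fin 3) (Fin 3) ℤ) = 1 := by
        rw [← Units.val_mul, mul_inv_cancel, Units.val_one]
      have hx2 : ((x⁻¹ : GL (Fin 3) ℤ) : Matrix (Fin 3) (Fin 3) ℤ) * (x : Matrix (Fin 3) (Fin 3) ℤ) = 1 := by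
        rw [← Units.val_mul, inv_mul_cancel, Units.val_one]
      set A := (x : Matrix (Fin 3) (Fin 3) ℤ)
      set C := ((x⁻¹ : GL (Fin 3) ℤ) : Matrix (Fin 3) (Fin 3) ℤ)
      calc C * Qm * Cᵀ = C * (A * Qm * Aᵀ) * Cᵀ := by rw [ih]
        _ = (C * A) * Qm * (C * A)ᵀ := by rw [transpose_mul]; noncomm_ring
        _ = Qm := by rw [hx2]; simp

/-- The first and third rows of any `M ∈ H` belong to `Ω (-2)` and its second
row belongs to `Ω 1`. -/
theorem rows_in_Omega (M : GL (Fin 3) ℤ) (hM : M ∈ H) :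
    (M : Matrix (Fin 3) (Fin 3) ℤ) 0 ∈ Omega (-2) ∧
    (M : Matrix (Fin 3) (Fin 3) ℤ) 2 ∈ Omega (-2) ∧
    (M : Matrix (Fin 3) (Fin 3) ℤ) 1 ∈ Omega 1 := by
  have h := invariant M hM
  set A := (M : Matrix (Fin 3) (Fin 3) ℤ)
  have h00 := congrFun (congrFun h 0) 0
  have h11 := congrFun (congrFun h 1) 1
  have h22 := congrFun (congrFun h 2) 2
  simp [Matrix.mul_apply, Fin.sum_univ_three, Qm, Matrix.transpose_apply] at h00 h11 h22
  refine ⟨?_, ?_, ?_⟩ <;> simp only [Omega, Set.mem_setOf_eq] <;> ring_nf <;> ring_nf at h00 h11 h22 <;> linarith
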